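/- For every integer d ≥ 2, the maximum of the finite set { d } ∪ { ((C(d,2) - j)(d + j) + 1)/(C(d+1,2) - j) : j ∈ {1, ..., C(d,2) - 1} } is attained at a unique element of the indexing set (i.e., the value d and the values for distinct j are such that the maximizing index is unique). -/
import Mathlib

/-- The candidate abscissa values: `v 0 = d` and, for `1 ≤ j ≤ C(d,2)-1`,
`v j = ((C(d,2)-j)(d+j)+1)/(C(d+1,2)-j)`. -/
def absVal (d j : ℕ) : ℚ :=
  if j = 0 then (d : ℚ)
  else (((d.choose 2 : ℚ) - j) * (d + j) + 1) / ((Nat.choose (d + 1) 2 : ℚ) - j)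


lemma exists_prime_two_mod_three : ∀ n : ℕ, n % 3 = 2 → ∃ p, p.Prime ∧ p ∣ n ∧ p % 3 = 2 := by
  intro n
  induction n using Nat.strong_induction_on with
  | _ n ih =>
    intro hn
    have hn1 : 1 < n := by omega
    have hp := Nat.minFac_prime (by omega : n ≠ 1)
    have hdvd := Nat.minFac_dvd n
    set p := n.minFac with hpdef
    have htri : p % 3 = 0 ∨ p % 3 = 1 ∨ p % 3 = 2 := by omega
    rcases htri with h | h | h
    · exfalso
      have h3 : 3 ∣ p := Nat.dvd_of_mod_eq_zero h
      have : 3 ∣ n := h3.trans hdvd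
      omega
    · -- p ≡ 1 mod 3, recurse on n / p
      obtain ⟨m, hm⟩ := hdvd
      have hp2 : 2 ≤ p := hp.two_le
      have hm0 : 0 < m := by
        rcases Nat.eq_zero_or_pos m with h0 | h0
        · subst h0; simp at hm; omega
        · exact h0
      have hmlt : m < n := by
        nlinarith
      have hmmod : m % 3 = 2 := by
        have h5 := Nat.mul_mod p m 3
        rw [← hm, h, one_mul] at h5
        omega
      obtain ⟨q, hq, hqd, hqm⟩ := ih m hmlt hmmod
      exact ⟨q, hq, hqd.trans ⟨p, by rw [hm]; ring⟩, hqm⟩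
    · exact ⟨p, hp, hdvd, h⟩

lemma sq_eq_neg_three {p : ℕ} (hp : p.Prime) (h2 : p ≠ 2) (h3 : p ≠ 3) (y : ZMod p)
    (hy : y ^ 2 = -3) : p % 3 = 1 := by
  haveI : Fact p.Prime := ⟨hp⟩
  have h2' : (2 : ZMod p) ≠ 0 := by
    have : ((2 : ℕ) : ZMod p) ≠ 0 := by
      rw [Ne, ZMod.natCast_eq_zero_iff]
      intro h
      exact h2 ((Nat.prime_dvd_prime_iff_eq hp Nat.prime_two).mp h)
    simpa using this
  have h4' : (4 : ZMod p) ≠ 0 := by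
    have : (4 : ZMod p) = 2 * 2 := by norm_num
    rw [this]
    exact mul_ne_zero h2' h2'
  set w : ZMod p := (y - 1) * (2 : ZMod p)⁻¹ with hw
  have h2w : 2 * w = y - 1 := by
    rw [hw]
    field_simp
  have hwsq : w ^ 2 + w + 1 = 0 := by
    apply mul_left_cancel₀ h4'
    have : (4 : ZMod p) * (w ^ 2 + w + 1) = (2 * w) ^ 2 + 2 * (2 * w) + 4 := by ring
    rw [this, h2w]
    rw [mul_zero]
    linear_combination hy
  have hw3 : w ^ 3 = 1 := by linear_combination (w - 1) * hwsq
  have hw1 : w ≠ 1 := by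
    intro h
    rw [h] at hwsq
    have : (3 : ZMod p) = 0 := by linear_combination hwsq
    have : ((3 : ℕ) : ZMod p) = 0 := by simpa using this
    rw [ZMod.natCast_eq_zero_iff] at this
    have := (Nat.prime_dvd_prime_iff_eq hp (by norm_num)).mp this
    exact h3 this
  have hw0 : w ≠ 0 := by
    intro h
    rw [h] at hwsq
    simp at hwsq
  have ho : orderOf w = 3 := orderOf_eq_prime hw3 hw1
  have hF : w ^ (p - 1) = 1 := ZMod.pow_card_sub_one_eq_one hw0
  have hdvd : 3 ∣ p - 1 := ho ▸ orderOf_dvd_of_pow_eq_one hF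
  have := hp.two_le
  omega

lemma mod9_lemma : ∀ x y : ZMod 9, (2*y+1)^2 + 3 = 2*x^3 + 6*x^2 → (x = 2 ∨ x = 5 ∨ x = 8) := by decide

lemma mod8_lemma : ∀ x y : ZMod 8, (2*y+1)^2 + 3 = 2*x^3 + 6*x^2 → (x = 3 ∨ x = 7) := by decide

lemma Anat_ne_aux (d t : ℕ) (hd : 2 ≤ d) (hsq : (2*t+1)^2 + 3 = 2*d^3 + 6*d^2) : False := by
  -- mod 9: d % 3 = 2
  have h9 : ((d : ZMod 9) = 2 ∨ (d : ZMod 9) = 5 ∨ (d : ZMod 9) = 8) := by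
    apply mod9_lemma _ (t : ZMod 9)
    have := congrArg (Nat.cast : ℕ → ZMod 9) hsq
    push_cast at this
    linear_combination this
  have hd3 : d % 3 = 2 := by
    have hcast : (d : ZMod 9) = ((d % 9 : ℕ) : ZMod 9) := (ZMod.natCast_mod d 9).symm
    have htri : d % 9 = 0 ∨ d % 9 = 1 ∨ d % 9 = 2 ∨ d % 9 = 3 ∨ d % 9 = 4 ∨ d % 9 = 5 ∨ d % 9 = 6 ∨ d % 9 = 7 ∨ d % 9 = 8 := by omega
    rcases htri with h|h|h|h|h|h|h|h|h <;> rw [hcast, h] at h9 <;>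
      first
        | omega
        | (exfalso; revert h9; decide)
  -- mod 8: d % 4 = 3
  have h8 : ((d : ZMod 8) = 3 ∨ (d : ZMod 8) = 7) := by
    apply mod8_lemma _ (t : ZMod 8)
    have := congrArg (Nat.cast : ℕ → ZMod 8) hsq
    push_cast at this
    linear_combination this
  have hd4 : d % 4 = 3 := by
    have hcast : (d : ZMod 8) = ((d % 8 : ℕ) : ZMod 8) := (ZMod.natCast_mod d 8).symm
    have htri : d % 8 = 0 ∨ d % 8 = 1 ∨ d % 8 = 2 ∨ d % 8 = 3 ∨ d % 8 = 4 ∨ d % 8 = 5 ∨ d % 8 = 6 ∨ d % 8 = 7 := by omega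
    rcases htri with h|h|h|h|h|h|h|h <;> rw [hcast, h] at h8 <;>
      first
        | omega
        | (exfalso; revert h8; decide)
  -- get a prime p ∣ d with p % 3 = 2
  obtain ⟨p, hp, hpd, hp3⟩ := exists_prime_two_mod_three d hd3
  haveI : Fact p.Prime := ⟨hp⟩
  have hp2 : p ≠ 2 := by
    rintro rfl
    obtain ⟨k, hk⟩ := hpd
    omega
  have hp3' : p ≠ 3 := by omega
  have hdz : (d : ZMod p) = 0 := (ZMod.natCast_eq_zero_iff d p).mpr hpd
  have hy : ((2 * t + 1 : ℕ) : ZMod p) ^ 2 = -3 := by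
    have := congrArg (Nat.cast : ℕ → ZMod p) hsq
    push_cast at this
    rw [hdz] at this
    push_cast
    linear_combination this
  have := sq_eq_neg_three hp hp2 hp3' _ hy
  omega




/-- `C1 d = C(d+1,2)` -/
def C1 (d : ℕ) : ℕ := (d+1).choose 2

/-- `Anat d = d*C1 d + d^2 - 1` -/
def Anat (d : ℕ) : ℕ := d * C1 d + d^2 - 1

noncomputable def FF (d t : ℕ) : ℚ :=
  (((2*d + C1 d : ℕ) : ℚ) * t - (t:ℚ)^2 - ((Anat d : ℕ) : ℚ)) / (t : ℚ)


lemma two_C1 (d : ℕ) : 2 * C1 d = d * (d + 1) := by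
  rw [C1, Nat.choose_two_right]
  have h1 : d + 1 - 1 = d := by omega
  rw [h1]
  have h := Nat.even_mul_succ_self d
  obtain ⟨k, hk⟩ := h
  have h2 : (d + 1) * d = d * (d + 1) := by ring
  omega

lemma two_c (d : ℕ) (hd : 2 ≤ d) : 2 * d.choose 2 = d * (d - 1) := by
  rw [Nat.choose_two_right]
  have h := Nat.even_mul_succ_self (d - 1)
  have h2 : (d-1) * (d - 1 + 1) = d * (d-1) := by
    have : d - 1 + 1 = d := by omega
    rw [this]; ring
  obtain ⟨k, hk⟩ := h
  omega

lemma c_add_d (d : ℕ) (hd : 2 ≤ d) : d.choose 2 + d = C1 d := by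
  have h1 := two_c d hd
  have h2 := two_C1 d
  obtain ⟨e, rfl⟩ : ∃ e, d = e + 2 := ⟨d - 2, by omega⟩
  have e1 : (e+2) * (e+2-1) = e*e + 3*e + 2 := by
    have : e + 2 - 1 = e + 1 := by omega
    rw [this]; ring
  have e2 : (e+2) * (e+2+1) = e*e + 5*e + 6 := by ring
  omega

lemma two_Anat (d : ℕ) (hd : 2 ≤ d) : 2 * Anat d + 2 = d^3 + 3*d^2 := by
  have h2 := two_C1 d
  have hpos : 1 ≤ d * C1 d + d^2 := by nlinarith
  rw [Anat]
  have : 2 * (d * C1 d + d^2 - 1) + 2 = 2 * (d * C1 d) + 2 * d^2 := by omega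
  rw [this]
  nlinarith [h2]

lemma Anat_ne (d t : ℕ) (hd : 2 ≤ d) : Anat d ≠ t * (t+1) := by
  intro h
  apply Anat_ne_aux d t hd
  have h2 := two_Anat d hd
  nlinarith [h, h2]

lemma key_ineq (A s t1 e : ℕ) (hA : 2*A + 2 = (e+5)^3 + 3*(e+5)^2)
    (hs : 2*s = (e+5)^2 + 3*(e+5)) (ht1 : t1 = s / 2) : A < t1 * (s - t1) := by
  obtain ⟨r, hr1, hr2⟩ : ∃ r, r ≤ 1 ∧ s = 2*t1 + r := ⟨s % 2, by omega, by omega⟩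
  subst hr2
  have hsub : 2*t1 + r - t1 = t1 + r := by omega
  rw [hsub]
  have e1 : (2*t1+r)^2 ≤ 4*(t1*(t1+r)) + 1 := by nlinarith [Nat.mul_le_mul hr1 hr1]
  have hsq : (2*(2*t1+r))^2 = ((e+5)^2+3*(e+5))^2 := by rw [hs]
  have e2 : 4*A + 2 ≤ (2*t1+r)^2 := by nlinarith [hA, hsq]
  linarith

lemma FF_lt_FF (d t1 t2 : ℕ) (h1 : 0 < t1) (h12 : t1 < t2) (hA : t1 * t2 < Anat d) :
    FF d t1 < FF d t2 := by
  have h2 : 0 < t2 := lt_trans h1 h12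
  have h1q : (0:ℚ) < t1 := by exact_mod_cast h1
  have h2q : (0:ℚ) < t2 := by exact_mod_cast h2
  have h12q : (t1:ℚ) < t2 := by exact_mod_cast h12
  have hAq : (t1:ℚ) * t2 < Anat d := by exact_mod_cast hA
  rw [FF, FF, div_lt_div_iff₀ h1q h2q]
  push_cast
  nlinarith [mul_pos (sub_pos.mpr h12q) (sub_pos.mpr hAq)]

lemma FF_lt_FF' (d t1 t2 : ℕ) (h1 : 0 < t1) (h12 : t1 < t2) (hA : Anat d < t1 * t2) :
    FF d t2 < FF d t1 := by
  have h2 : 0 < t2 := lt_trans h1 h12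
  have h1q : (0:ℚ) < t1 := by exact_mod_cast h1
  have h2q : (0:ℚ) < t2 := by exact_mod_cast h2
  have h12q : (t1:ℚ) < t2 := by exact_mod_cast h12
  have hAq : (Anat d : ℚ) < t1 * t2 := by exact_mod_cast hA
  rw [FF, FF, div_lt_div_iff₀ h2q h1q]
  push_cast
  nlinarith [mul_pos (sub_pos.mpr h12q) (sub_pos.mpr hAq)]

lemma absVal_eq_FF (d j : ℕ) (hd : 2 ≤ d) (hj1 : 1 ≤ j) (hj : j ≤ d.choose 2 - 1) :
    absVal d j = FF d (C1 d - j) := by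
  have hcd := c_add_d d hd
  have hc1 : 1 ≤ d.choose 2 := by omega
  have hjC1 : j ≤ C1 d := by omega
  have hjC1' : j + 1 ≤ C1 d := by omega
  have hApos : 1 ≤ d * C1 d + d^2 := by nlinarith [two_C1 d]
  rw [absVal, if_neg (by omega : j ≠ 0), FF]
  have hden : ((C1 d - j : ℕ) : ℚ) = (C1 d : ℚ) - j := by
    push_cast [Nat.cast_sub hjC1]; ring
  have hC1' : ((Nat.choose (d+1) 2 : ℕ) : ℚ) = (C1 d : ℚ) := by rw [C1]
  have hc' : ((d.choose 2 : ℕ) : ℚ) = (C1 d : ℚ) - d := by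
    rw [← hcd]; push_cast; ring
  have hA' : ((Anat d : ℕ) : ℚ) = (d:ℚ) * C1 d + (d:ℚ)^2 - 1 := by
    rw [Anat]
    push_cast [Nat.cast_sub hApos]
    ring
  have hS : ((2*d + C1 d : ℕ) : ℚ) = 2*(d:ℚ) + C1 d := by push_cast; ring
  rw [hC1', hc', hA', hS, hden]
  have hdenne : (C1 d : ℚ) - j ≠ 0 := by
    have : (j:ℚ) < C1 d := by exact_mod_cast (by omega : j < C1 d)
    intro h; nlinarith
  field_simp
  ring

set_option maxHeartbeats 1000000 in
lemma strictmax (d : ℕ) (hd : 2 ≤ d) :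
    ∃ j₀, j₀ ≤ d.choose 2 - 1 ∧
      ∀ j, j ≤ d.choose 2 - 1 → j ≠ j₀ → absVal d j < absVal d j₀ := by
  by_cases hd4 : d ≤ 4
  · interval_cases d
    · -- d = 2
      refine ⟨0, by norm_num [Nat.choose], ?_⟩
      intro j hj hj0
      simp [Nat.choose] at hj
      omega
    · -- d = 3
      refine ⟨0, by norm_num [Nat.choose], ?_⟩
      intro j hj hj0
      have : j = 1 ∨ j = 2 := by simp [Nat.choose] at hj; omega
      rcases this with rfl | rfl <;> norm_num [absVal, Nat.choose]
    · -- d = 4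
      refine ⟨0, by norm_num [Nat.choose], ?_⟩
      intro j hj hj0
      have : j = 1 ∨ j = 2 ∨ j = 3 ∨ j = 4 ∨ j = 5 := by
        simp [Nat.choose] at hj; omega
      rcases this with rfl | rfl | rfl | rfl | rfl <;> norm_num [absVal, Nat.choose]
  · -- d ≥ 5
    have hd5 : 5 ≤ d := by omega
    have hcd := c_add_d d hd
    have h2C1 := two_C1 d
    have h2A := two_Anat d hd
    have hC1_15 : 15 ≤ C1 d := by nlinarith
    set t0 := Nat.sqrt (Anat d) with ht0
    have hsq1 : t0 ^ 2 ≤ Anat d := Nat.sqrt_le' (Anat d)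
    have hsq2 : Anat d < (t0 + 1) ^ 2 := Nat.lt_succ_sqrt' (Anat d)
    have ht0_ge : d + 1 ≤ t0 := by
      rw [ht0, Nat.le_sqrt]
      nlinarith
    have ht0_le : t0 < C1 d - 2 := by
      rw [ht0, Nat.sqrt_lt]
      obtain ⟨m, hm⟩ : ∃ m, C1 d = m + 15 := ⟨C1 d - 15, by omega⟩
      have h13 : C1 d - 2 = m + 13 := by omega
      have heq : 2 * m + 30 = d * (d + 1) := by omega
      rw [h13]
      nlinarith [heq, hd5, h2A, sq_nonneg (d*d - 13)]
    obtain ⟨ts, hts_ge, hts_le, hts_low, hts_high⟩ :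
        ∃ ts, d + 1 ≤ ts ∧ ts ≤ C1 d - 2 ∧ (ts - 1) * ts < Anat d ∧ Anat d < ts * (ts + 1) := by
      rcases lt_or_ge (t0 * (t0 + 1)) (Anat d) with hc | hc
      · refine ⟨t0 + 1, by omega, by omega, by simpa using hc, by nlinarith [hsq2]⟩
      · refine ⟨t0, by omega, by omega, ?_, ?_⟩
        · obtain ⟨u, hu⟩ : ∃ u, t0 = u + 6 := ⟨t0 - 6, by omega⟩
          rw [hu] at hsq1 ⊢
          have h56 : u + 6 - 1 = u + 5 := by omega
          rw [h56]
          nlinarith [hsq1]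
        · have hne := Anat_ne d t0 hd
          omega
    have hlow : ∀ t, t < ts → (t * ts < Anat d) := by
      intro t ht
      have h1 : t * ts ≤ (ts - 1) * ts := Nat.mul_le_mul (by omega) (le_refl ts)
      omega
    have hhigh : ∀ t, ts < t → (Anat d < ts * t) := by
      intro t ht
      have h1 : ts * (ts + 1) ≤ ts * t := Nat.mul_le_mul (le_refl ts) (by omega)
      omega
    have hstrict : ∀ t, 0 < t → t ≠ ts → FF d t < FF d ts := by
      intro t ht htne
      rcases lt_or_gt_of_ne htne with h | h
      · exact FF_lt_FF d t ts ht h (hlow t h)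
      · exact FF_lt_FF' d ts t (by omega) h (hhigh t h)
    -- FF d ts > d
    have hd_lt : (d : ℚ) < FF d ts := by
      set t1 := (d + C1 d) / 2 with ht1
      have hs2 : 2 * (d + C1 d) = d^2 + 3*d := by
        have hdd : d * (d + 1) = d^2 + d := by ring
        omega
      have ht1_pos : 0 < t1 := by omega
      obtain ⟨e, he⟩ : ∃ e, d = e + 5 := ⟨d - 5, by omega⟩
      have hkey : Anat d < t1 * ((d + C1 d) - t1) :=
        key_ineq (Anat d) (d + C1 d) t1 e (he ▸ h2A) (he ▸ hs2) ht1
      have hlt : (d : ℚ) < FF d t1 := by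
        rw [FF, lt_div_iff₀ (by exact_mod_cast ht1_pos : (0:ℚ) < (t1:ℚ))]
        have ht1le : t1 ≤ d + C1 d := by omega
        have hkq : (Anat d : ℚ) < (t1 : ℚ) * ((d:ℚ) + C1 d - t1) := by
          have := hkey
          have hcast : ((t1 * ((d + C1 d) - t1) : ℕ) : ℚ) = (t1:ℚ) * ((d:ℚ) + C1 d - t1) := by
            push_cast [Nat.cast_sub ht1le]; ring
          calc (Anat d : ℚ) < ((t1 * ((d + C1 d) - t1) : ℕ) : ℚ) := by exact_mod_cast this
            _ = _ := hcast
        push_cast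
        nlinarith [hkq]
      rcases eq_or_ne t1 ts with h | h
      · rw [← h]; exact hlt
      · exact lt_trans hlt (hstrict t1 ht1_pos h)
    -- conclude
    refine ⟨C1 d - ts, by omega, ?_⟩
    have hts_eq : C1 d - (C1 d - ts) = ts := by omega
    have hj0_eq : absVal d (C1 d - ts) = FF d ts := by
      rw [absVal_eq_FF d _ hd (by omega) (by omega), hts_eq]
    intro j hj hjne
    rw [hj0_eq]
    rcases Nat.eq_zero_or_pos j with rfl | hj1
    · rw [absVal, if_pos rfl]
      exact hd_lt
    · rw [absVal_eq_FF d j hd hj1 hj]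
      apply hstrict
      · omega
      · omega

/-- The maximum of `{d} ∪ {((C(d,2)-j)(d+j)+1)/(C(d+1,2)-j) : 1 ≤ j ≤ C(d,2)-1}`
is attained at a unique index. -/
theorem unique_maximizer (d : ℕ) (hd : 2 ≤ d) :
    ∃! j₀ : ℕ, j₀ ≤ d.choose 2 - 1 ∧
      ∀ j : ℕ, j ≤ d.choose 2 - 1 → absVal d j ≤ absVal d j₀ := by
  obtain ⟨j₀, hj₀, hstr⟩ := strictmax d hd
  refine ⟨j₀, ⟨hj₀, fun j hj => ?_⟩, fun j₁ ⟨hj₁, hmax⟩ => ?_⟩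
  · rcases eq_or_ne j j₀ with rfl | h
    · exact le_refl _
    · exact le_of_lt (hstr j hj h)
  · by_contra h
    exact absurd (hmax j₀ hj₀) (not_le.mpr (hstr j₁ hj₁ h))
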